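/- Let P be a finite bipartite poset with parts X, Y ⊆ P and all non-identity morphisms going from elements of X to elements of Y. Let C be a category with finite coproducts, let F, G, H : P → C be functors, and let η : G ⟹ H, ν : F ⟹ H be natural transformations. Assume: (a) for each x ∈ X there is chosen a lift μ_x : F(x) → G(x) with η_x ∘ μ_x = ν_x; (b) for every y ∈ Y, the canonical morphism ∐_{α : x → y, x ∈ X} F(x) → F(y) has the left lifting property with respect to η_y : G(y) → H(y). Then there exists a natural transformation μ : F ⟹ G with η ∘ μ = ν extending the chosen lifts μ_x. -/
import Mathlib


open CategoryTheory

/-- Let `P` be a finite bipartite poset with parts `X, Y` and all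
non-identity morphisms going from `X` to `Y`.  Let `C` be a category (with finite
coproducts), `F, G, H : P ⥤ C` functors, `η : G ⟹ H`, `ν : F ⟹ H` natural
transformations.  Assume (a) for each `x ∈ X` there is a chosen lift `μX x : F x → G x`
with `η_x ∘ μX x = ν_x`, and (b) for every `y ∈ Y` the canonical morphism
`∐_{α : x → y, x ∈ X} F x → F y` has the left lifting property with respect to
`η_y : G y → H y` (stated via the universal property of the coproduct: any family of
morphisms `u x : F x → G y` making the squares commute lifts coherently through `η_y`).
Then there exists a natural transformation `μ : F ⟹ G` with `η ∘ μ = ν` extending the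
chosen lifts `μX`. -/
theorem bipartite_poset_lifting
    (P : Type*) [PartialOrder P] [Finite P]
    (X Y : Set P)
    (hcover : ∀ p : P, p ∈ X ∨ p ∈ Y)
    (hdisj : ∀ p : P, ¬(p ∈ X ∧ p ∈ Y))
    (hbip : ∀ p q : P, p < q → p ∈ X ∧ q ∈ Y)
    (C : Type*) [Category C] [Limits.HasFiniteCoproducts C]
    (F G H : P ⥤ C) (η : G ⟶ H) (ν : F ⟶ H)
    (μX : ∀ x : P, x ∈ X → (F.obj x ⟶ G.obj x))
    (hμX : ∀ (x : P) (hx : x ∈ X), μX x hx ≫ η.app x = ν.app x)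
    (hlift : ∀ (y : P), y ∈ Y →
      ∀ (u : ∀ x : P, x ∈ X → x < y → (F.obj x ⟶ G.obj y)) (v : F.obj y ⟶ H.obj y),
        (∀ (x : P) (hx : x ∈ X) (hxy : x < y),
          F.map (homOfLE hxy.le) ≫ v = u x hx hxy ≫ η.app y) →
        ∃ w : F.obj y ⟶ G.obj y,
          (∀ (x : P) (hx : x ∈ X) (hxy : x < y),
            F.map (homOfLE hxy.le) ≫ w = u x hx hxy) ∧
          w ≫ η.app y = v) :
    ∃ μ : F ⟶ G, μ ≫ η = ν ∧ ∀ (x : P) (hx : x ∈ X), μ.app x = μX x hx := by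
  classical
  have hw : ∀ p : P, p ∈ Y → ∃ w : F.obj p ⟶ G.obj p,
      (∀ (x : P) (hx : x ∈ X) (hxy : x < p),
        F.map (homOfLE hxy.le) ≫ w = μX x hx ≫ G.map (homOfLE hxy.le)) ∧
      w ≫ η.app p = ν.app p := by
    intro y hy
    refine hlift y hy (fun x hx hxy => μX x hx ≫ G.map (homOfLE hxy.le)) (ν.app y) ?_
    intro x hx hxy
    rw [ν.naturality, Category.assoc, η.naturality, ← Category.assoc, hμX]
  choose w hw1 hw2 using hw
  refine ⟨⟨fun p => if hp : p ∈ X then μX p hp else w p ((hcover p).resolve_left hp),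
      ?_⟩, ?_, ?_⟩
  · intro p q f
    rcases eq_or_lt_of_le (leOfHom f) with h | h
    · subst h
      have : f = 𝟙 p := Subsingleton.elim _ _
      subst this
      simp
    · obtain ⟨hp, hq⟩ := hbip p q h
      have hq' : q ∉ X := fun hq'' => hdisj q ⟨hq'', hq⟩
      have hf : f = homOfLE h.le := Subsingleton.elim _ _
      subst hf
      simp only [dif_pos hp, dif_neg hq']
      exact hw1 q _ p hp h
  · ext p
    by_cases hp : p ∈ X
    · simp [dif_pos hp, hμX]
    · simp [dif_neg hp, hw2]
  · intro x hx
    simp [dif_pos hx]
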